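/- Under the assumptions of the previous differentiability lemma, together with: for all x ∈ I₂, t ↦ φ_t^{-1}(x) is twice differentiable and for every compact B ⊂ Θ, E[sup_{t∈B} |∂²φ_t^{-1}∘φ_θ(ε)|²] < ∞, the function M is twice continuously differentiable on Θ and M''(t) = 2E[(∂φ_t^{-1}(X))²] − 2E[∂²φ_t^{-1}(X)(ε − φ_t^{-1}(X))]. -/

import Mathlib

/-!
Write `g s = ψ s ∘ X - ε` with `X = φ θ ∘ ε`, so that `M s = E[(g s)²]`, `M' s = 2 E[g' s · g s]`
and `M'' s = 2 E[(g' s)²] + 2 E[g'' s · g s]`. Around a point `t ∈ Θ` take a closed ball inside `Θ`: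
the suprema `G₁`, `G₂` of `|g'|`, `|g''|` over it are square integrable, and the mean value theorem
gives `|g s| ≤ |g t| + r G₁`. Every integrand above, and its derivative in `s`, is then dominated by
a product of two square-integrable functions, so differentiation under the integral sign and
dominated convergence apply.
-/

open MeasureTheory Set Filter Metric Topology

section

variable {Ω : Type*} [MeasurableSpace Ω] {μ : Measure Ω}

theorem aestronglyMeasurable_of_hasDerivAt {E : Type*} [NormedAddCommGroup E] [NormedSpace ℝ E]
    {f : ℝ → Ω → E} {f' : Ω → E} {t : ℝ} (hf : ∀ᶠ s in 𝓝 t, AEStronglyMeasurable (f s) μ)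
    (hd : ∀ᵐ ω ∂μ, HasDerivAt (f · ω) (f' ω) t) : AEStronglyMeasurable f' μ := by
  obtain ⟨u, hu⟩ := exists_seq_tendsto (𝓝[≠] t)
  obtain ⟨N, hN⟩ :=
    (hu.eventually (eventually_nhdsWithin_of_eventually_nhds hf)).exists_forall_of_atTop
  refine aestronglyMeasurable_of_tendsto_ae (f := fun n ω => slope (f · ω) t (u (n + N)))
    atTop (fun n => ?_) ?_
  · simp only [slope_def_module]
    exact ((hN _ (Nat.le_add_left N n)).sub hf.self_of_nhds).const_smul _
  · filter_upwards [hd] with ω hω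
    exact (hasDerivAt_iff_tendsto_slope.1 hω).comp ((tendsto_add_atTop_iff_nat N).2 hu)

theorem memLp_of_integrable_pow {g : Ω → ℝ} {n : ℕ} (hg : ∀ ω, 0 ≤ g ω) (hn : n ≠ 0)
    (h : Integrable (fun ω => g ω ^ n) μ) : MemLp g n μ := by
  have hmeas : AEStronglyMeasurable g μ := by
    have := (Real.continuous_rpow_const (inv_nonneg.2 n.cast_nonneg)).comp_aestronglyMeasurable
      h.aestronglyMeasurable
    simpa only [Function.comp_def, Real.pow_rpow_inv_natCast (hg _) hn] using this
  refine (integrable_norm_rpow_iff hmeas (by exact_mod_cast hn) (ENNReal.natCast_ne_top n)).1 ?_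
  simpa [Real.norm_eq_abs, abs_of_nonneg (hg _)] using h

end

theorem abs_le_iSup_abs_of_continuousOn {X : Type*} [TopologicalSpace X] {K : Set X}
    (hK : IsCompact K) {f : X → ℝ} (hf : ContinuousOn f K) {x : X} (hx : x ∈ K) :
    |f x| ≤ ⨆ y : K, |f y| := by
  have hbdd : BddAbove (range fun y : K => |f y|) := by
    simpa only [image_eq_range] using hK.bddAbove_image hf.abs
  exact le_ciSup hbdd ⟨x, hx⟩

theorem abs_le_abs_add_mul_of_hasDerivAt {f f' : ℝ → ℝ} {t r C s : ℝ}
    (hf : ∀ u ∈ ball t r, HasDerivAt f (f' u) u) (hC : ∀ u ∈ ball t r, |f' u| ≤ C)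
    (hs : s ∈ ball t r) : |f s| ≤ |f t| + C * r := by
  have ht : t ∈ ball t r := mem_ball_self (pos_of_mem_ball hs)
  have hmvt : ‖f s - f t‖ ≤ C * ‖s - t‖ :=
    (convex_ball t r).norm_image_sub_le_of_norm_hasDerivWithin_le
      (fun u hu => (hf u hu).hasDerivWithinAt) hC ht hs
  have hC₀ : 0 ≤ C := (abs_nonneg _).trans (hC t ht)
  have hst : |s - t| ≤ r := (mem_ball_iff_norm.1 hs).le
  rw [Real.norm_eq_abs, Real.norm_eq_abs] at hmvt
  nlinarith [abs_sub_abs_le_abs_sub (f s) (f t), mul_le_mul_of_nonneg_left hst hC₀]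

structure TwiceDerivL2Dominated {Ω : Type*} [MeasurableSpace Ω] (μ : Measure Ω)
    (g g' g'' : ℝ → Ω → ℝ) (t r : ℝ) (G₁ G₂ : Ω → ℝ) : Prop where
  radius_pos : 0 < r
  hasDerivAt : ∀ ω, ∀ s ∈ ball t r, HasDerivAt (g · ω) (g' s ω) s
  hasDerivAt_deriv : ∀ ω, ∀ s ∈ ball t r, HasDerivAt (g' · ω) (g'' s ω) s
  aestronglyMeasurable : ∀ s ∈ ball t r, AEStronglyMeasurable (g s) μ
  memLp_center : MemLp (g t) 2 μ
  memLp_bound : MemLp G₁ 2 μ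
  memLp_bound₂ : MemLp G₂ 2 μ
  abs_deriv_le : ∀ ω, ∀ s ∈ ball t r, |g' s ω| ≤ G₁ ω
  abs_deriv₂_le : ∀ ω, ∀ s ∈ ball t r, |g'' s ω| ≤ G₂ ω

namespace TwiceDerivL2Dominated

variable {Ω : Type*} [MeasurableSpace Ω] {μ : Measure Ω} {g g' g'' : ℝ → Ω → ℝ} {t r : ℝ}
  {G₁ G₂ : Ω → ℝ}

theorem center_mem (h : TwiceDerivL2Dominated μ g g' g'' t r G₁ G₂) : t ∈ ball t r :=
  mem_ball_self h.radius_pos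

theorem aestronglyMeasurable_deriv (h : TwiceDerivL2Dominated μ g g' g'' t r G₁ G₂) {s : ℝ}
    (hs : s ∈ ball t r) : AEStronglyMeasurable (g' s) μ :=
  aestronglyMeasurable_of_hasDerivAt
    (eventually_of_mem (isOpen_ball.mem_nhds hs) h.aestronglyMeasurable)
    (ae_of_all _ fun ω => h.hasDerivAt ω s hs)

theorem aestronglyMeasurable_deriv₂ (h : TwiceDerivL2Dominated μ g g' g'' t r G₁ G₂) {s : ℝ}
    (hs : s ∈ ball t r) : AEStronglyMeasurable (g'' s) μ :=
  aestronglyMeasurable_of_hasDerivAt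
    (eventually_of_mem (isOpen_ball.mem_nhds hs) fun _ => h.aestronglyMeasurable_deriv)
    (ae_of_all _ fun ω => h.hasDerivAt_deriv ω s hs)

theorem abs_le (h : TwiceDerivL2Dominated μ g g' g'' t r G₁ G₂) (ω : Ω) {s : ℝ}
    (hs : s ∈ ball t r) : |g s ω| ≤ |g t ω| + G₁ ω * r :=
  abs_le_abs_add_mul_of_hasDerivAt (h.hasDerivAt ω) (fun u hu => h.abs_deriv_le ω u hu) hs

theorem memLp_envelope (h : TwiceDerivL2Dominated μ g g' g'' t r G₁ G₂) :
    MemLp (fun ω => |g t ω| + G₁ ω * r) 2 μ :=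
  h.memLp_center.abs.add (h.memLp_bound.mul_const r)

theorem bound_nonneg (h : TwiceDerivL2Dominated μ g g' g'' t r G₁ G₂) (ω : Ω) : 0 ≤ G₁ ω :=
  (abs_nonneg _).trans (h.abs_deriv_le ω t h.center_mem)

theorem bound₂_nonneg (h : TwiceDerivL2Dominated μ g g' g'' t r G₁ G₂) (ω : Ω) : 0 ≤ G₂ ω :=
  (abs_nonneg _).trans (h.abs_deriv₂_le ω t h.center_mem)

theorem abs_deriv_mul_le (h : TwiceDerivL2Dominated μ g g' g'' t r G₁ G₂) (ω : Ω) {s : ℝ}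
    (hs : s ∈ ball t r) : |g' s ω * g s ω| ≤ G₁ ω * (|g t ω| + G₁ ω * r) := by
  rw [abs_mul]
  exact mul_le_mul (h.abs_deriv_le ω s hs) (h.abs_le ω hs) (abs_nonneg _) (h.bound_nonneg ω)

theorem abs_deriv₂_mul_le (h : TwiceDerivL2Dominated μ g g' g'' t r G₁ G₂) (ω : Ω) {s : ℝ}
    (hs : s ∈ ball t r) : |g'' s ω * g s ω| ≤ G₂ ω * (|g t ω| + G₁ ω * r) := by
  rw [abs_mul]
  exact mul_le_mul (h.abs_deriv₂_le ω s hs) (h.abs_le ω hs) (abs_nonneg _) (h.bound₂_nonneg ω)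

theorem abs_deriv_sq_le (h : TwiceDerivL2Dominated μ g g' g'' t r G₁ G₂) (ω : Ω) {s : ℝ}
    (hs : s ∈ ball t r) : |g' s ω ^ 2| ≤ G₁ ω ^ 2 := by
  rw [abs_pow]
  exact pow_le_pow_left₀ (abs_nonneg _) (h.abs_deriv_le ω s hs) 2

theorem memLp_deriv (h : TwiceDerivL2Dominated μ g g' g'' t r G₁ G₂) {s : ℝ}
    (hs : s ∈ ball t r) : MemLp (g' s) 2 μ :=
  h.memLp_bound.of_le (h.aestronglyMeasurable_deriv hs) <| ae_of_all _ fun ω => by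
    simpa only [Real.norm_eq_abs, abs_of_nonneg (h.bound_nonneg ω)] using h.abs_deriv_le ω s hs

theorem memLp_deriv₂ (h : TwiceDerivL2Dominated μ g g' g'' t r G₁ G₂) {s : ℝ}
    (hs : s ∈ ball t r) : MemLp (g'' s) 2 μ :=
  h.memLp_bound₂.of_le (h.aestronglyMeasurable_deriv₂ hs) <| ae_of_all _ fun ω => by
    simpa only [Real.norm_eq_abs, abs_of_nonneg (h.bound₂_nonneg ω)] using h.abs_deriv₂_le ω s hs

theorem hasDerivAt_integral_sq (h : TwiceDerivL2Dominated μ g g' g'' t r G₁ G₂) :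
    HasDerivAt (fun s => ∫ ω, g s ω ^ 2 ∂μ) (∫ ω, 2 * (g' t ω * g t ω) ∂μ) t := by
  refine (hasDerivAt_integral_of_dominated_loc_of_deriv_le (ball_mem_nhds t h.radius_pos)
    (eventually_of_mem (ball_mem_nhds t h.radius_pos) fun s hs =>
      (h.aestronglyMeasurable s hs).pow 2)
    ((memLp_two_iff_integrable_sq h.memLp_center.1).1 h.memLp_center)
    (F' := fun s ω => 2 * (g' s ω * g s ω))
    (((h.aestronglyMeasurable_deriv h.center_mem).mul h.memLp_center.1).const_mul 2)
    (bound := fun ω => 2 * (G₁ ω * (|g t ω| + G₁ ω * r))) ?_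
    ((h.memLp_bound.integrable_mul h.memLp_envelope).const_mul 2) ?_).2
  · refine ae_of_all _ fun ω s hs => ?_
    rw [Real.norm_eq_abs, abs_mul, abs_two]
    exact mul_le_mul_of_nonneg_left (h.abs_deriv_mul_le ω hs) zero_le_two
  · exact ae_of_all _ fun ω s hs => ((h.hasDerivAt ω s hs).pow 2).congr_deriv (by simp; ring)

theorem hasDerivAt_integral_deriv_mul (h : TwiceDerivL2Dominated μ g g' g'' t r G₁ G₂) :
    HasDerivAt (fun s => ∫ ω, 2 * (g' s ω * g s ω) ∂μ)
      (2 * (∫ ω, g' t ω ^ 2 ∂μ) + 2 * ∫ ω, g'' t ω * g t ω ∂μ) t := by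
  have hsq : Integrable (fun ω => g' t ω ^ 2) μ :=
    (memLp_two_iff_integrable_sq (h.aestronglyMeasurable_deriv h.center_mem)).1
      (h.memLp_deriv h.center_mem)
  have hmul : Integrable (fun ω => g'' t ω * g t ω) μ :=
    (h.memLp_deriv₂ h.center_mem).integrable_mul h.memLp_center
  have hvalue : ∫ ω, 2 * (g' t ω ^ 2 + g'' t ω * g t ω) ∂μ =
      2 * (∫ ω, g' t ω ^ 2 ∂μ) + 2 * ∫ ω, g'' t ω * g t ω ∂μ := by
    rw [integral_const_mul, integral_add hsq hmul, mul_add]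
  rw [← hvalue]
  refine (hasDerivAt_integral_of_dominated_loc_of_deriv_le (ball_mem_nhds t h.radius_pos)
    (eventually_of_mem (ball_mem_nhds t h.radius_pos) fun s hs =>
      ((h.aestronglyMeasurable_deriv hs).mul (h.aestronglyMeasurable s hs)).const_mul 2)
    (((h.memLp_deriv h.center_mem).integrable_mul h.memLp_center).const_mul 2)
    (F' := fun s ω => 2 * (g' s ω ^ 2 + g'' s ω * g s ω)) ((hsq.1.add hmul.1).const_mul 2)
    (bound := fun ω => 2 * (G₁ ω ^ 2 + G₂ ω * (|g t ω| + G₁ ω * r))) ?_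
    (((memLp_two_iff_integrable_sq h.memLp_bound.1).1 h.memLp_bound).add
      (h.memLp_bound₂.integrable_mul h.memLp_envelope) |>.const_mul 2) ?_).2
  · refine ae_of_all _ fun ω s hs => ?_
    rw [Real.norm_eq_abs, abs_mul, abs_two]
    refine mul_le_mul_of_nonneg_left ((abs_add_le _ _).trans ?_) zero_le_two
    exact add_le_add (h.abs_deriv_sq_le ω hs) (h.abs_deriv₂_mul_le ω hs)
  · refine ae_of_all _ fun ω s hs => ?_
    exact (((h.hasDerivAt_deriv ω s hs).mul (h.hasDerivAt ω s hs)).const_mul 2).congr_deriv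
      (by ring)

theorem continuousAt_integral_deriv_sq_add (h : TwiceDerivL2Dominated μ g g' g'' t r G₁ G₂)
    (hcont : ∀ᵐ ω ∂μ, ContinuousAt (g'' · ω) t) :
    ContinuousAt (fun s => 2 * (∫ ω, g' s ω ^ 2 ∂μ) + 2 * ∫ ω, g'' s ω * g s ω ∂μ) t := by
  have hball : ball t r ∈ 𝓝 t := ball_mem_nhds t h.radius_pos
  have hsq : ContinuousAt (fun s => ∫ ω, g' s ω ^ 2 ∂μ) t :=
    continuousAt_of_dominated
      (eventually_of_mem hball fun s hs => (h.aestronglyMeasurable_deriv hs).pow 2)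
      (eventually_of_mem hball fun s hs => ae_of_all _ fun ω => h.abs_deriv_sq_le ω hs)
      ((memLp_two_iff_integrable_sq h.memLp_bound.1).1 h.memLp_bound)
      (ae_of_all _ fun ω => (h.hasDerivAt_deriv ω t h.center_mem).continuousAt.pow 2)
  have hmul : ContinuousAt (fun s => ∫ ω, g'' s ω * g s ω ∂μ) t :=
    continuousAt_of_dominated
      (eventually_of_mem hball fun s hs =>
        (h.aestronglyMeasurable_deriv₂ hs).mul (h.aestronglyMeasurable s hs))
      (eventually_of_mem hball fun s hs => ae_of_all _ fun ω => h.abs_deriv₂_mul_le ω hs)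
      (h.memLp_bound₂.integrable_mul h.memLp_envelope)
      (hcont.mono fun ω hω => hω.mul (h.hasDerivAt ω t h.center_mem).continuousAt)
  exact (continuousAt_const.mul hsq).add (continuousAt_const.mul hmul)

theorem of_iSup_abs [IsFiniteMeasure μ] {n : ℕ} (hn : 2 ≤ n) (hr : 0 < r)
    (hg : ∀ ω, ∀ s ∈ closedBall t r, HasDerivAt (g · ω) (g' s ω) s)
    (hg' : ∀ ω, ∀ s ∈ closedBall t r, HasDerivAt (g' · ω) (g'' s ω) s)
    (hg''_cont : ∀ ω, ContinuousOn (g'' · ω) (closedBall t r))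
    (hmeas : ∀ s ∈ closedBall t r, AEStronglyMeasurable (g s) μ) (hcenter : MemLp (g t) 2 μ)
    (hsup : Integrable (fun ω => (⨆ s : closedBall t r, |g' s ω|) ^ n) μ)
    (hsup₂ : Integrable (fun ω => (⨆ s : closedBall t r, |g'' s ω|) ^ 2) μ) :
    TwiceDerivL2Dominated μ g g' g'' t r (fun ω => ⨆ s : closedBall t r, |g' s ω|)
      (fun ω => ⨆ s : closedBall t r, |g'' s ω|) where
  radius_pos := hr
  hasDerivAt ω s hs := hg ω s (ball_subset_closedBall hs)
  hasDerivAt_deriv ω s hs := hg' ω s (ball_subset_closedBall hs)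
  aestronglyMeasurable s hs := hmeas s (ball_subset_closedBall hs)
  memLp_center := hcenter
  memLp_bound := (memLp_of_integrable_pow (fun _ => Real.iSup_nonneg fun _ => abs_nonneg _)
    (by omega) hsup).mono_exponent (by exact_mod_cast hn)
  memLp_bound₂ := by
    exact_mod_cast memLp_of_integrable_pow (fun _ => Real.iSup_nonneg fun _ => abs_nonneg _)
      two_ne_zero hsup₂
  abs_deriv_le ω s hs := abs_le_iSup_abs_of_continuousOn (isCompact_closedBall t r)
    (fun u hu => (hg' ω u hu).continuousAt.continuousWithinAt) (ball_subset_closedBall hs)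
  abs_deriv₂_le ω s hs := abs_le_iSup_abs_of_continuousOn (isCompact_closedBall t r)
    (hg''_cont ω) (ball_subset_closedBall hs)

end TwiceDerivL2Dominated

theorem M_twice_continuously_differentiable_general
    {Ω : Type*} [MeasurableSpace Ω] (ℙ : Measure Ω) [IsProbabilityMeasure ℙ]
    (ε : Ω → ℝ)
    (Θ : Set ℝ) (hΘopen : IsOpen Θ) (θ : ℝ)
    (φ ψ Dψ D2ψ : ℝ → ℝ → ℝ)
    (hderiv : ∀ x : ℝ, ∀ s ∈ Θ, HasDerivAt (fun u => ψ u x) (Dψ s x) s)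
    (hderiv2 : ∀ x : ℝ, ∀ s ∈ Θ, HasDerivAt (fun u => Dψ u x) (D2ψ s x) s)
    (hderiv2_cont : ∀ x : ℝ, ContinuousOn (fun s => D2ψ s x) Θ)
    (hL2 : ∀ s ∈ Θ, MemLp (fun ω => ψ s (φ θ (ε ω))) 2 ℙ) (hL2ε : MemLp ε 2 ℙ)
    (hsup4 : ∀ B : Set ℝ, B ⊆ Θ → IsCompact B →
      Integrable (fun ω => (⨆ s : B, |Dψ s (φ θ (ε ω))|) ^ 4) ℙ)
    (hsup2 : ∀ B : Set ℝ, B ⊆ Θ → IsCompact B →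
      Integrable (fun ω => (⨆ s : B, |D2ψ s (φ θ (ε ω))|) ^ 2) ℙ)
    (M M' M'' : ℝ → ℝ)
    (hM : ∀ s, M s = ∫ ω, (ψ s (φ θ (ε ω)) - ε ω) ^ 2 ∂ℙ)
    (hM' : ∀ s, M' s = -2 * ∫ ω, Dψ s (φ θ (ε ω)) * (ε ω - ψ s (φ θ (ε ω))) ∂ℙ)
    (hM'' : ∀ s, M'' s = 2 * (∫ ω, (Dψ s (φ θ (ε ω))) ^ 2 ∂ℙ) -
      2 * ∫ ω, D2ψ s (φ θ (ε ω)) * (ε ω - ψ s (φ θ (ε ω))) ∂ℙ) :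
    (∀ t ∈ Θ, HasDerivAt M (M' t) t) ∧ (∀ t ∈ Θ, HasDerivAt M' (M'' t) t) ∧
      ContinuousOn M'' Θ := by
  have hdom : ∀ t ∈ Θ, ∃ r G₁ G₂, TwiceDerivL2Dominated ℙ (fun s ω => ψ s (φ θ (ε ω)) - ε ω)
      (fun s ω => Dψ s (φ θ (ε ω))) (fun s ω => D2ψ s (φ θ (ε ω))) t r G₁ G₂ := by
    intro t ht
    obtain ⟨r, hr, hB⟩ := nhds_basis_closedBall.mem_iff.1 (hΘopen.mem_nhds ht)
    exact ⟨r, _, _, .of_iSup_abs (n := 4) (by norm_num) hr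
      (fun ω s hs => (hderiv _ s (hB hs)).sub_const _) (fun ω s hs => hderiv2 _ s (hB hs))
      (fun ω => (hderiv2_cont _).mono hB)
      (fun s hs => (hL2 s (hB hs)).aestronglyMeasurable.sub hL2ε.aestronglyMeasurable)
      ((hL2 t ht).sub hL2ε) (hsup4 _ hB (isCompact_closedBall t r))
      (hsup2 _ hB (isCompact_closedBall t r))⟩
  have hM : M = fun s => ∫ ω, (ψ s (φ θ (ε ω)) - ε ω) ^ 2 ∂ℙ := funext hM
  have hM' : M' = fun s => ∫ ω, 2 * (Dψ s (φ θ (ε ω)) * (ψ s (φ θ (ε ω)) - ε ω)) ∂ℙ := by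
    refine funext fun s => ?_
    rw [hM', ← integral_const_mul]
    congr 1 with ω
    ring
  have hM'' : M'' = fun s => 2 * (∫ ω, Dψ s (φ θ (ε ω)) ^ 2 ∂ℙ) +
      2 * ∫ ω, D2ψ s (φ θ (ε ω)) * (ψ s (φ θ (ε ω)) - ε ω) ∂ℙ :=
    funext fun s => by
      rw [hM'', sub_eq_add_neg, ← mul_neg, ← integral_neg]; congr 3 with ω; ring
  subst hM hM' hM''
  refine ⟨fun t ht => ?_, fun t ht => ?_, fun t ht => ?_⟩ <;> obtain ⟨r, G₁, G₂, h⟩ := hdom t ht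
  · exact h.hasDerivAt_integral_sq
  · exact h.hasDerivAt_integral_deriv_mul
  · exact (h.continuousAt_integral_deriv_sq_add (ae_of_all _ fun ω =>
      (hderiv2_cont _).continuousAt (hΘopen.mem_nhds ht))).continuousWithinAt

/-- `M` is twice continuously differentiable on `Θ` with
`M''(t) = 2E[(∂φ_t⁻¹(X))²] - 2E[∂²φ_t⁻¹(X)(ε - φ_t⁻¹(X))]`, where `X = φ_θ(ε)`. -/
theorem M_twice_continuously_differentiable
    {Ω : Type*} [MeasurableSpace Ω] (ℙ : Measure Ω) [IsProbabilityMeasure ℙ]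
    (ε : Ω → ℝ) (hε : Measurable ε)
    (Θ : Set ℝ) (hΘopen : IsOpen Θ) (θ : ℝ) (hθ : θ ∈ Θ)
    (φ ψ Dψ D2ψ : ℝ → ℝ → ℝ)
    (hψ : ∀ s ∈ Θ, ∀ x : ℝ, ψ s (φ s x) = x)
    (hderiv : ∀ x : ℝ, ∀ s ∈ Θ, HasDerivAt (fun u => ψ u x) (Dψ s x) s)
    (hderiv2 : ∀ x : ℝ, ∀ s ∈ Θ, HasDerivAt (fun u => Dψ u x) (D2ψ s x) s)
    (hderiv2_cont : ∀ x : ℝ, ContinuousOn (fun s => D2ψ s x) Θ)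
    (hL2 : ∀ s ∈ Θ, MemLp (fun ω => ψ s (φ θ (ε ω))) 2 ℙ) (hL2ε : MemLp ε 2 ℙ)
    (hsup4 : ∀ B : Set ℝ, B ⊆ Θ → IsCompact B →
      Integrable (fun ω => (⨆ s : B, |Dψ s (φ θ (ε ω))|) ^ 4) ℙ)
    (hsup2 : ∀ B : Set ℝ, B ⊆ Θ → IsCompact B →
      Integrable (fun ω => (⨆ s : B, |D2ψ s (φ θ (ε ω))|) ^ 2) ℙ)
    (M M' M'' : ℝ → ℝ)
    (hM : ∀ s, M s = ∫ ω, (ψ s (φ θ (ε ω)) - ε ω) ^ 2 ∂ℙ)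
    (hM' : ∀ s, M' s = -2 * ∫ ω, Dψ s (φ θ (ε ω)) * (ε ω - ψ s (φ θ (ε ω))) ∂ℙ)
    (hM'' : ∀ s, M'' s = 2 * (∫ ω, (Dψ s (φ θ (ε ω))) ^ 2 ∂ℙ) -
      2 * ∫ ω, D2ψ s (φ θ (ε ω)) * (ε ω - ψ s (φ θ (ε ω))) ∂ℙ) :
    (∀ t ∈ Θ, HasDerivAt M (M' t) t) ∧ (∀ t ∈ Θ, HasDerivAt M' (M'' t) t) ∧
      ContinuousOn M'' Θ :=
  M_twice_continuously_differentiable_general ℙ ε Θ hΘopen θ φ ψ Dψ D2ψ hderiv hderiv2 hderiv2_cont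
    hL2 hL2ε hsup4 hsup2 M M' M'' hM hM' hM''
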